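/- Let N ≥ 4 be an integer and m > 1, and set σ_c = 2(N−1)(m−1)/(3m+1). There exists σ0 ∈ (0, σ_c) such that for every σ ∈ (0, σ0), every good profile with interface for the profile ODE satisfies the initial behavior (P1): f(0) > 0 and f'(0) = 0. -/

import Mathlib

/-!
For `σ < 2(m-1)/(m+1)` (below `σ_c` as soon as `N ≥ 4`) the Pohozaev-type functional
`pohozaev`, obtained by testing the equation against `t² (f^m)'` and `t f^m`, is strictly
decreasing wherever `f > 0`, and it vanishes at every zero of `f` where `t (f^m)' = 0`.
So `f` cannot be positive between a zero in `[0, η)` and the interface `η`; hence `f(0) > 0`.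
Near `0` the equation then reads `(t^(N-1) (f^m)')' = t^(N-1) · O(1)`, which forces
`(f^m)'(t) = O(t)`, so `(f^m)'(0) = 0`, and `f'(0) = 0` follows from `f = (f^m)^(1/m)`.
-/

open Set

/-- One-sided derivative (on `[0,∞)`) of the `m`-th power of the profile. -/
noncomputable def Dm (m : ℝ) (f : ℝ → ℝ) : ℝ → ℝ :=
  derivWithin (fun ξ => f ξ ^ m) (Ici 0)

/-- Second one-sided derivative (on `[0,∞)`) of the `m`-th power of the profile. -/
noncomputable def D2m (m : ℝ) (f : ℝ → ℝ) : ℝ → ℝ :=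
  derivWithin (Dm m f) (Ici 0)

/-- A good profile for the ODE
`(f^m)'' + ((N-1)/ξ)(f^m)' - f/(m-1) + ξ^σ f^m = 0`:
a continuous nonnegative function on `[0,∞)` whose `m`-th power is twice
differentiable, solving the ODE wherever `f > 0`, and satisfying one of the
initial behaviors (P1), (P2), (P3). -/
structure GoodProfile (m σ N : ℝ) (f : ℝ → ℝ) : Prop where
  cont : ContinuousOn f (Ici 0)
  nonneg : ∀ ξ, 0 ≤ ξ → 0 ≤ f ξ
  diff1 : ∀ ξ, 0 ≤ ξ → DifferentiableWithinAt ℝ (fun ξ => f ξ ^ m) (Ici 0) ξ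
  diff2 : ∀ ξ, 0 ≤ ξ → DifferentiableWithinAt ℝ (Dm m f) (Ici 0) ξ
  ode : ∀ ξ, 0 < ξ → 0 < f ξ →
    D2m m f ξ + ((N - 1) / ξ) * Dm m f ξ - f ξ / (m - 1) + ξ ^ σ * f ξ ^ m = 0
  init : (0 < f 0 ∧ HasDerivWithinAt f 0 (Ici 0) 0)
    ∨ (f 0 = 0 ∧ Dm m f 0 = 0)
    ∨ (∃ ξ0 > (0:ℝ), f ξ0 = 0 ∧ Dm m f ξ0 = 0 ∧
        ∃ ε > (0:ℝ), ∀ ξ ∈ Ioo ξ0 (ξ0 + ε), 0 < f ξ)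

/-- A good profile has an interface at `η ∈ (0,∞)` if `f(η) = 0`, `(f^m)'(η) = 0`
and `f > 0` on a left-neighborhood of `η`. -/
def HasInterfaceAt (m : ℝ) (f : ℝ → ℝ) (η : ℝ) : Prop :=
  0 < η ∧ f η = 0 ∧ Dm m f η = 0 ∧ ∃ ε > (0:ℝ), ∀ ξ ∈ Ioo (η - ε) η, 0 < f ξ

open Filter Topology

theorem hasDerivAt_derivWithin_Ici {g : ℝ → ℝ} {ξ : ℝ} (hξ : 0 < ξ)
    (hg : DifferentiableWithinAt ℝ g (Ici 0) ξ) : HasDerivAt g (derivWithin g (Ici 0) ξ) ξ := by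
  rw [derivWithin_of_mem_nhds (Ici_mem_nhds hξ)]
  exact (hg.differentiableAt (Ici_mem_nhds hξ)).hasDerivAt

theorem abs_le_mul_of_hasDerivAt_add_div_mul {D D' : ℝ → ℝ} {k C ξ : ℝ} (hk : 0 < k)
    (hξ : 0 < ξ) (hcont : ContinuousOn D (Icc 0 ξ)) (hderiv : ∀ t ∈ Ioo 0 ξ, HasDerivAt D (D' t) t)
    (hbound : ∀ t ∈ Ioo 0 ξ, |D' t + k / t * D t| ≤ C) : |D ξ| ≤ C * ξ := by
  have hg : ∀ t ∈ Ioo 0 ξ,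
      HasDerivAt (fun s => s ^ k * D s) (t ^ k * (D' t + k / t * D t)) t := by
    intro t ht
    refine ((Real.hasDerivAt_rpow_const (Or.inl ht.1.ne')).mul (hderiv t ht)).congr_deriv ?_
    rw [Real.rpow_sub_one ht.1.ne']
    field_simp
    ring
  obtain ⟨θ, hθ, hslope⟩ := exists_hasDerivAt_eq_slope (fun s => s ^ k * D s) _ hξ
    ((continuousOn_id.rpow_const fun _ _ => Or.inr hk.le).mul hcont) hg
  rw [Real.zero_rpow hk.ne', zero_mul, sub_zero, sub_zero, eq_div_iff hξ.ne'] at hslope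
  have hξk : 0 < ξ ^ k := Real.rpow_pos_of_pos hξ k
  have hθk : θ ^ k ≤ ξ ^ k := Real.rpow_le_rpow hθ.1.le hθ.2.le hk.le
  have : ξ ^ k * |D ξ| ≤ ξ ^ k * (C * ξ) :=
    calc ξ ^ k * |D ξ| = θ ^ k * |D' θ + k / θ * D θ| * ξ := by
          rw [← abs_of_pos hξk, ← abs_mul, ← hslope, abs_mul, abs_mul, abs_of_pos hξ,
            abs_of_pos (Real.rpow_pos_of_pos hθ.1 k)]
      _ ≤ ξ ^ k * C * ξ := by gcongr; exact hbound θ hθ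
      _ = ξ ^ k * (C * ξ) := by ring
  exact le_of_mul_le_mul_left this hξk

theorem eq_zero_of_hasDerivAt_add_div_mul_bounded {D D' : ℝ → ℝ} {k C δ : ℝ} (hk : 0 < k)
    (hδ : 0 < δ) (hcont : ContinuousOn D (Icc 0 δ))
    (hderiv : ∀ t ∈ Ioo 0 δ, HasDerivAt D (D' t) t)
    (hbound : ∀ t ∈ Ioo 0 δ, |D' t + k / t * D t| ≤ C) : D 0 = 0 := by
  have hsmall : ∀ ξ ∈ Ioo 0 δ, |D ξ| ≤ C * ξ := fun ξ hξ =>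
    abs_le_mul_of_hasDerivAt_add_div_mul hk hξ.1 (hcont.mono (Icc_subset_Icc_right hξ.2.le))
      (fun t ht => hderiv t ⟨ht.1, ht.2.trans hξ.2⟩) (fun t ht => hbound t ⟨ht.1, ht.2.trans hξ.2⟩)
  have hlim : Tendsto D (𝓝[>] 0) (𝓝 (D 0)) :=
    ((hcont 0 ⟨le_rfl, hδ.le⟩).mono_of_mem_nhdsWithin (Icc_mem_nhdsGT hδ)).tendsto
  have hlim0 : Tendsto D (𝓝[>] 0) (𝓝 0) := by
    refine squeeze_zero_norm' ?_ (by simpa using (tendsto_nhdsWithin_of_tendsto_nhds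
      ((continuous_const_mul C).tendsto 0)))
    filter_upwards [Ioo_mem_nhdsGT hδ] with ξ hξ using hsmall ξ hξ
  exact tendsto_nhds_unique hlim hlim0

namespace GoodProfile

variable {m σ N : ℝ} {f : ℝ → ℝ}

theorem hasDerivAt_rpow (hf : GoodProfile m σ N f) {ξ : ℝ} (hξ : 0 < ξ) :
    HasDerivAt (fun t => f t ^ m) (Dm m f ξ) ξ :=
  hasDerivAt_derivWithin_Ici hξ (hf.diff1 ξ hξ.le)

theorem hasDerivAt_Dm (hf : GoodProfile m σ N f) {ξ : ℝ} (hξ : 0 < ξ) :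
    HasDerivAt (Dm m f) (D2m m f ξ) ξ :=
  hasDerivAt_derivWithin_Ici hξ (hf.diff2 ξ hξ.le)

theorem continuousOn_rpow (hf : GoodProfile m σ N f) : ContinuousOn (fun t => f t ^ m) (Ici 0) :=
  fun ξ hξ => (hf.diff1 ξ hξ).continuousWithinAt

theorem continuousOn_Dm (hf : GoodProfile m σ N f) : ContinuousOn (Dm m f) (Ici 0) :=
  fun ξ hξ => (hf.diff2 ξ hξ).continuousWithinAt

theorem Dm_eq_zero_of_eq_zero (hf : GoodProfile m σ N f) (hm : m ≠ 0) {ζ : ℝ} (hζ : 0 < ζ)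
    (hfζ : f ζ = 0) : Dm m f ζ = 0 := by
  have hmin : IsLocalMin (fun t => f t ^ m) ζ := by
    filter_upwards [eventually_gt_nhds hζ] with t ht
    rw [hfζ, Real.zero_rpow hm]
    exact Real.rpow_nonneg (hf.nonneg t ht.le) m
  rw [Dm, derivWithin_of_mem_nhds (Ici_mem_nhds hζ)]
  exact hmin.deriv_eq_zero

noncomputable def pohozaev (m σ N : ℝ) (f : ℝ → ℝ) (t : ℝ) : ℝ :=
  t ^ 2 * Dm m f t ^ 2 / 2
    + (1 + σ / 2) * (t * f t ^ m * Dm m f t + (N - 2) * (f t ^ m) ^ 2 / 2)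
    + t ^ (σ + 2) * (f t ^ m) ^ 2 / 2
    - m / (m ^ 2 - 1) * t ^ 2 * f t ^ (m + 1)

theorem pohozaev_eq_zero (hm : 0 < m) {ζ : ℝ} (hfζ : f ζ = 0) (hζ : ζ = 0 ∨ Dm m f ζ = 0) :
    pohozaev m σ N f ζ = 0 := by
  have hm1 : m + 1 ≠ 0 := by positivity
  obtain rfl | hζ := hζ <;> simp [pohozaev, *, Real.zero_rpow hm.ne', Real.zero_rpow hm1]

theorem continuousOn_pohozaev (hf : GoodProfile m σ N f) (hm : 0 < m) (hσ : 0 ≤ σ) :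
    ContinuousOn (pohozaev m σ N f) (Ici 0) := by
  have hG := hf.continuousOn_rpow
  have hD := hf.continuousOn_Dm
  have hpow : ContinuousOn (fun t : ℝ => t ^ (σ + 2)) (Ici 0) :=
    continuousOn_id.rpow_const fun _ _ => Or.inr (by linarith)
  have hf1 : ContinuousOn (fun t => f t ^ (m + 1)) (Ici 0) :=
    hf.cont.rpow_const fun _ _ => Or.inr (by linarith)
  unfold pohozaev
  fun_prop

theorem hasDerivAt_pohozaev (hf : GoodProfile m σ N f) (hm : 1 < m) {ξ : ℝ} (hξ : 0 < ξ)
    (hfξ : 0 < f ξ) :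
    HasDerivAt (pohozaev m σ N f)
      ((3 - N + σ / 2) * ξ * Dm m f ξ ^ 2
        + (σ / (2 * (m - 1)) - 1 / (m + 1)) * ξ * f ξ ^ (m + 1)) ξ := by
  have hG := hf.hasDerivAt_rpow hξ
  have hD := hf.hasDerivAt_Dm hξ
  have hGξ : 0 < f ξ ^ m := Real.rpow_pos_of_pos hfξ m
  -- near `ξ`, `f ^ (m + 1)` is a power of the differentiable function `f ^ m`
  have hf1 : (fun t => f t ^ (m + 1)) =ᶠ[𝓝 ξ] fun t => (f t ^ m) ^ ((m + 1) / m) := by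
    filter_upwards [Ioi_mem_nhds hξ] with t ht
    rw [← Real.rpow_mul (hf.nonneg t ht.le), mul_div_cancel₀ _ (by positivity)]
  have hP := ((((hasDerivAt_pow 2 ξ).mul (hD.pow 2)).div_const 2).add
      ((((hasDerivAt_id ξ).mul hG).mul hD).add (((hG.pow 2).const_mul (N - 2)).div_const 2)
        |>.const_mul (1 + σ / 2))).add
      (((Real.hasDerivAt_rpow_const (p := σ + 2) (Or.inl hξ.ne')).mul (hG.pow 2)).div_const 2)
      |>.sub (((hasDerivAt_pow 2 ξ).const_mul (m / (m ^ 2 - 1))).mul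
        ((hG.rpow_const (p := (m + 1) / m) (Or.inl hGξ.ne')).congr_of_eventuallyEq hf1))
  refine hP.congr_deriv ?_
  have hode := hf.ode ξ hξ hfξ
  have hm0 : m ≠ 0 := by positivity
  have e1 : ξ ^ (σ + 2 - 1) = ξ ^ σ * ξ := by
    rw [add_sub_assoc, Real.rpow_add hξ]; norm_num
  have e2 : ξ ^ (σ + 2) = ξ ^ σ * ξ ^ 2 := by
    rw [Real.rpow_add hξ]; norm_cast
  have e3 : f ξ ^ (m + 1) = f ξ ^ m * f ξ := by rw [Real.rpow_add hfξ, Real.rpow_one]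
  have e4 : (f ξ ^ m) ^ ((m + 1) / m - 1) = f ξ := by
    rw [← Real.rpow_mul hfξ.le, show m * ((m + 1) / m - 1) = 1 by field_simp; ring,
      Real.rpow_one]
  have hD2 : D2m m f ξ = f ξ / (m - 1) - ξ ^ σ * f ξ ^ m - (N - 1) / ξ * Dm m f ξ := by
    linarith
  simp only [Pi.mul_apply, Pi.pow_apply, id_eq]
  rw [e1, e2, e3, e4, hD2]
  have : m - 1 ≠ 0 := by linarith
  have : m + 1 ≠ 0 := by linarith
  have : m ^ 2 - 1 ≠ 0 := by nlinarith
  field_simp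
  ring

theorem pohozaev_strictAntiOn (hf : GoodProfile m σ N f) (hm : 1 < m) (hσ : 0 ≤ σ)
    (hσm : σ < 2 * (m - 1) / (m + 1)) (hσN : σ ≤ 2 * (N - 3)) {a b : ℝ} (ha : 0 ≤ a)
    (hpos : ∀ ξ ∈ Ioo a b, 0 < f ξ) : StrictAntiOn (pohozaev m σ N f) (Icc a b) := by
  refine strictAntiOn_of_deriv_neg (convex_Icc a b)
    ((hf.continuousOn_pohozaev (by linarith) hσ).mono fun x hx => ha.trans hx.1) ?_
  intro x hx
  rw [interior_Icc] at hx
  have hx0 : 0 < x := ha.trans_lt hx.1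
  have hfx := hpos x hx
  rw [(hf.hasDerivAt_pohozaev hm hx0 hfx).deriv]
  have hc1 : 3 - N + σ / 2 ≤ 0 := by linarith
  have hc2 : σ / (2 * (m - 1)) - 1 / (m + 1) < 0 := by
    rw [sub_neg, div_lt_div_iff₀ (by linarith) (by linarith)]
    rw [lt_div_iff₀ (by linarith)] at hσm
    linarith
  have h1 : (3 - N + σ / 2) * x * Dm m f x ^ 2 ≤ 0 :=
    mul_nonpos_of_nonpos_of_nonneg (mul_nonpos_of_nonpos_of_nonneg hc1 hx0.le) (sq_nonneg _)
  have h2 : (σ / (2 * (m - 1)) - 1 / (m + 1)) * x * f x ^ (m + 1) < 0 :=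
    mul_neg_of_neg_of_pos (mul_neg_of_neg_of_pos hc2 hx0) (Real.rpow_pos_of_pos hfx _)
  linarith

theorem not_forall_pos_Ioo (hf : GoodProfile m σ N f) (hm : 1 < m) (hσ : 0 ≤ σ)
    (hσm : σ < 2 * (m - 1) / (m + 1)) (hσN : σ ≤ 2 * (N - 3)) {a b : ℝ} (ha : 0 ≤ a)
    (hab : a < b) (hfa : f a = 0) (hfb : f b = 0) (hDb : Dm m f b = 0) :
    ¬ ∀ ξ ∈ Ioo a b, 0 < f ξ := by
  intro hpos
  have hm0 : 0 < m := by linarith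
  have hUa : pohozaev m σ N f a = 0 := pohozaev_eq_zero hm0 hfa <|
    ha.eq_or_lt.imp Eq.symm fun ha => hf.Dm_eq_zero_of_eq_zero hm0.ne' ha hfa
  have hUb : pohozaev m σ N f b = 0 := pohozaev_eq_zero hm0 hfb (Or.inr hDb)
  have := hf.pohozaev_strictAntiOn hm hσ hσm hσN ha hpos (left_mem_Icc.2 hab.le)
    (right_mem_Icc.2 hab.le) hab
  rw [hUa, hUb] at this
  exact this.false

theorem pos_zero_of_hasInterfaceAt (hf : GoodProfile m σ N f) (hm : 1 < m) (hσ : 0 ≤ σ)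
    (hσm : σ < 2 * (m - 1) / (m + 1)) (hσN : σ ≤ 2 * (N - 3)) {η : ℝ}
    (hη : HasInterfaceAt m f η) : 0 < f 0 := by
  obtain ⟨hη0, hfη, hDη, ε, hε, hposη⟩ := hη
  refine (hf.nonneg 0 le_rfl).lt_of_ne fun hf0 => ?_
  -- the last zero `a` of `f` before the positivity interval `(η - ε, η)`
  set c := η - min ε η
  have hc0 : 0 ≤ c := sub_nonneg.2 (min_le_right _ _)
  have hZ : IsCompact (Icc 0 c ∩ f ⁻¹' {0}) :=
    isCompact_Icc.of_isClosed_subset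
      ((hf.cont.mono Icc_subset_Ici_self).preimage_isClosed_of_isClosed isClosed_Icc
        isClosed_singleton) inter_subset_left
  obtain ⟨a, ⟨⟨ha0, hac⟩, hfa⟩, ha⟩ := hZ.exists_isGreatest ⟨0, ⟨le_rfl, hc0⟩, hf0.symm⟩
  refine hf.not_forall_pos_Ioo hm hσ hσm hσN ha0 (hac.trans_lt ?_) hfa hfη hDη fun ξ hξ => ?_
  · exact sub_lt_self η (lt_min hε hη0)
  rcases le_or_gt ξ c with hξc | hξc
  · refine (hf.nonneg ξ (ha0.trans hξ.1.le)).lt_of_ne fun hfξ => ?_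
    exact hξ.1.not_ge (ha ⟨⟨ha0.trans hξ.1.le, hξc⟩, hfξ.symm⟩)
  · exact hposη ξ ⟨by linarith [min_le_left ε η], hξ.2⟩

theorem Dm_zero_eq_zero_of_pos (hf : GoodProfile m σ N f) (hm : 1 < m) (hσ : 0 ≤ σ) (hN : 1 < N)
    (hf0 : 0 < f 0) : Dm m f 0 = 0 := by
  have hnear : ∀ᶠ t in 𝓝[≥] 0, 0 < f t ∧ f t < f 0 + 1 :=
    (hf.cont 0 self_mem_Ici).eventually (Ioo_mem_nhds hf0 (lt_add_one _))
  obtain ⟨δ, hδ, hδf⟩ := mem_nhdsGE_iff_exists_Ico_subset.1 hnear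
  set B := f 0 + 1
  refine eq_zero_of_hasDerivAt_add_div_mul_bounded (D' := D2m m f) (k := N - 1)
    (C := B / (m - 1) + B ^ m) (sub_pos.2 hN) (lt_min hδ one_pos)
    (hf.continuousOn_Dm.mono Icc_subset_Ici_self) (fun t ht => hf.hasDerivAt_Dm ht.1) ?_
  intro t ⟨ht0, ht⟩
  obtain ⟨hft, hftB⟩ := hδf ⟨ht0.le, ht.trans_le (min_le_left _ _)⟩
  have hode : D2m m f t + (N - 1) / t * Dm m f t = f t / (m - 1) - t ^ σ * f t ^ m := by
    linarith [hf.ode t ht0 hft]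
  have h1 : f t / (m - 1) ≤ B / (m - 1) := by gcongr
  have h2 : t ^ σ * f t ^ m ≤ B ^ m :=
    calc t ^ σ * f t ^ m ≤ 1 * B ^ m := by
          gcongr
          exact Real.rpow_le_one ht0.le (ht.trans_le (min_le_right _ _)).le hσ
      _ = B ^ m := one_mul _
  have h3 : 0 ≤ f t / (m - 1) := div_nonneg hft.le (by linarith)
  have h4 : 0 ≤ t ^ σ * f t ^ m := by positivity
  rw [hode, abs_le]
  constructor <;> linarith

theorem hasDerivWithinAt_zero_of_Dm_eq_zero (hf : GoodProfile m σ N f) (hm : m ≠ 0) (hf0 : 0 < f 0)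
    (hD0 : Dm m f 0 = 0) : HasDerivWithinAt f 0 (Ici 0) 0 := by
  have hG : HasDerivWithinAt (fun t => f t ^ m) (Dm m f 0) (Ici 0) 0 :=
    (hf.diff1 0 le_rfl).hasDerivWithinAt
  rw [hD0] at hG
  have hroot : ∀ t ∈ Ici (0 : ℝ), f t = (f t ^ m) ^ m⁻¹ := fun t ht =>
    (Real.rpow_rpow_inv (hf.nonneg t ht) hm).symm
  simpa using (hG.rpow_const (p := m⁻¹) (Or.inl (Real.rpow_pos_of_pos hf0 m).ne')).congr hroot
    (hroot 0 self_mem_Ici)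

end GoodProfile

/-- Theorem 1.3, first item: for `N ≥ 4`, `m > 1`, there is
`σ0 ∈ (0, σ_c)` such that for every `σ ∈ (0, σ0)` every good profile with
interface has initial behavior (P1): `f(0) > 0` and `f'(0) = 0`. -/
theorem goodProfile_with_interface_P1_for_small_sigma
    (N : ℕ) (hN : 4 ≤ N) (m : ℝ) (hm : 1 < m) :
    ∃ σ0 : ℝ, 0 < σ0 ∧ σ0 < 2 * ((N : ℝ) - 1) * (m - 1) / (3 * m + 1) ∧
      ∀ σ : ℝ, 0 < σ → σ < σ0 →
        ∀ f η, GoodProfile m σ (N : ℝ) f → HasInterfaceAt m f η →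
          0 < f 0 ∧ HasDerivWithinAt f 0 (Ici 0) 0 := by
  have hN4 : (4 : ℝ) ≤ N := by exact_mod_cast hN
  have hm1 : 0 < m - 1 := sub_pos.2 hm
  have hσ0_lt_two : 2 * (m - 1) / (m + 1) < 2 := by
    rw [div_lt_iff₀ (by linarith)]; linarith
  refine ⟨2 * (m - 1) / (m + 1), by positivity, ?_, ?_⟩
  · calc 2 * (m - 1) / (m + 1) < 6 * (m - 1) / (3 * m + 1) := by
          rw [div_lt_div_iff₀ (by linarith) (by linarith)]; nlinarith
      _ ≤ 2 * ((N : ℝ) - 1) * (m - 1) / (3 * m + 1) := by gcongr; linarith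
  · intro σ hσ hσσ0 f η hf hη
    have hf0 := hf.pos_zero_of_hasInterfaceAt hm hσ.le hσσ0 (by linarith) hη
    exact ⟨hf0, hf.hasDerivWithinAt_zero_of_Dm_eq_zero (by positivity) hf0
      (hf.Dm_zero_eq_zero_of_pos hm hσ.le (by linarith) hf0)⟩
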